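/- Up to a permutation of the letters of the alphabet, the word X_n defined by X_1 = a_1, X_i = X_{i-1} a_i X_{i-1} is the unique minimal crucial word with respect to the set of squares S_1^n = { XX : X nonempty } over an n-letter alphabet. -/

import Mathlib

/-- A word is square-free if it has no factor `X ++ X` with `X` nonempty. -/
def SqFree {α : Type*} (w : List α) : Prop :=
  ∀ X : List α, X ≠ [] → ¬ (X ++ X) <:+: w

/-- A word over the alphabet `Fin (n+1)` is crucial w.r.t. the set of squares
if it is square-free but appending any letter creates a square factor. -/
def CrucialSq {n : ℕ} (w : List (Fin n)) : Prop :=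
  SqFree w ∧ ∀ a : Fin n, ∃ X : List (Fin n), X ≠ [] ∧ (X ++ X) <:+: (w ++ [a])

/-- `Xfin n 0 = []`, `Xfin n (i+1) = Xfin n i ++ [a_{i+1}] ++ Xfin n i` over the
`(n+1)`-letter alphabet `Fin (n+1)`, with `a_{i+1}` represented by `(i : Fin (n+1))`. -/
def Xfin (n : ℕ) : ℕ → List (Fin (n + 1))
  | 0 => []
  | i + 1 => Xfin n i ++ [(open Fin.NatCast in (i : Fin (n + 1)))] ++ Xfin n i

open Fin.NatCast

lemma Xfin_length (n k : ℕ) : (Xfin n k).length = 2 ^ k - 1 := by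
  induction k with
  | zero => simp [Xfin]
  | succ k ih =>
    have h1 : 1 ≤ 2 ^ k := Nat.one_le_two_pow
    simp [Xfin, ih, pow_succ]; omega

lemma mem_Xfin_lt {n k : ℕ} (hk : k ≤ n + 1) : ∀ x ∈ Xfin n k, x.val < k := by
  induction k with
  | zero => simp [Xfin]
  | succ k ih =>
    intro x hx
    simp only [Xfin, List.mem_append, List.mem_singleton] at hx
    rcases hx with (hx | hx) | hx
    · exact lt_trans (ih (by omega) x hx) (Nat.lt_succ_self k)
    · subst hx; rw [Fin.val_cast_of_lt (by omega)]; omega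
    · exact lt_trans (ih (by omega) x hx) (Nat.lt_succ_self k)

lemma cast_not_mem_Xfin {n k : ℕ} (hk : k ≤ n) : (k : Fin (n + 1)) ∉ Xfin n k := by
  intro h
  have := mem_Xfin_lt (by omega) _ h
  rw [Fin.val_cast_of_lt (by omega)] at this
  omega

/-- suffix version of `prefix_of_prefix_length_le` -/
lemma suffix_of_suffix_length_le {α : Type*} {l₁ l₂ l₃ : List α}
    (h1 : l₁ <:+ l₃) (h2 : l₂ <:+ l₃) (h : l₁.length ≤ l₂.length) : l₁ <:+ l₂ := by
  rw [← List.reverse_prefix] at h1 h2 ⊢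
  exact List.prefix_of_prefix_length_le h1 h2 (by simpa)

lemma suffix_eq_of_length {α : Type*} {l₁ l₂ l₃ : List α}
    (h1 : l₁ <:+ l₃) (h2 : l₂ <:+ l₃) (h : l₁.length = l₂.length) : l₁ = l₂ :=
  (suffix_of_suffix_length_le h1 h2 h.le).eq_of_length h

/-- an infix of `A ++ [c] ++ A` avoiding `c` is an infix of `A`. -/
lemma infix_of_avoid {α : Type*} {w A : List α} {c : α}
    (h : w <:+: A ++ [c] ++ A) (hc : c ∉ w) : w <:+: A := by
  obtain ⟨s, t, hst⟩ := h
  by_cases h1 : s.length + w.length ≤ A.length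
  · -- s ++ w is a prefix of A
    have hpre : s ++ w <+: A ++ [c] ++ A := ⟨t, by simpa [List.append_assoc] using hst⟩
    have hA : A <+: A ++ [c] ++ A := ⟨[c] ++ A, by simp⟩
    have : s ++ w <+: A := List.prefix_of_prefix_length_le hpre hA (by simpa using h1)
    exact ((List.suffix_append s w).isInfix).trans this.isInfix
  by_cases h2 : A.length + 1 ≤ s.length
  · -- w ++ t is a suffix of A
    have hlen : s.length + w.length + t.length = 2 * A.length + 1 := by
      have := congrArg List.length hst; simp at this; omega
    have hsuf : w ++ t <:+ A ++ [c] ++ A := ⟨s, by simpa [List.append_assoc] using hst⟩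
    have hA : A <:+ A ++ [c] ++ A := ⟨A ++ [c], by simp⟩
    have : w ++ t <:+ A := suffix_of_suffix_length_le hsuf hA (by simp; omega)
    exact ((List.prefix_append w t).isInfix).trans this.isInfix
  · -- impossible: w contains c
    exfalso
    apply hc
    have hiw : A.length - s.length < w.length := by omega
    have hiL : A.length < (s ++ (w ++ t)).length := by
      rw [← List.append_assoc, hst]; simp
    have e1 : (s ++ (w ++ t))[A.length]'hiL = c := by
      have : (s ++ (w ++ t)) = A ++ [c] ++ A := by rw [← List.append_assoc]; exact hst
      simp only [this]
      rw [List.getElem_append_left (h := by simp)]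
      rw [List.getElem_append_right (by simp)]
      simp
    rw [List.getElem_append_right (by omega)] at e1
    rw [List.getElem_append_left (by omega)] at e1
    rw [← e1]
    exact List.getElem_mem _

lemma sqFree_nil {α : Type*} : SqFree ([] : List α) := by
  intro X hX h
  rw [List.infix_nil] at h
  simp [List.append_eq_nil_iff] at h
  exact hX h

lemma sqFree_Xfin {n k : ℕ} (hk : k ≤ n + 1) : SqFree (Xfin n k) := by
  induction k with
  | zero => exact sqFree_nil
  | succ k ih =>
    intro X hX h
    by_cases hc : (k : Fin (n + 1)) ∈ X
    · have h1 : List.count (k : Fin (n+1)) (X ++ X) ≤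
          List.count (k : Fin (n+1)) (Xfin n (k+1)) := h.sublist.count_le _
      rw [Xfin] at h1
      have h2 : List.count (k : Fin (n+1)) (Xfin n k) = 0 :=
        List.count_eq_zero.2 (cast_not_mem_Xfin (by omega))
      simp [List.count_append, h2] at h1
      have := List.count_pos_iff.2 hc
      omega
    · have : (k : Fin (n+1)) ∉ X ++ X := by simp [hc]
      exact ih (by omega) X hX (infix_of_avoid (by rw [Xfin] at h; exact h) this)

lemma Xfin_suffix {n : ℕ} {k m : ℕ} (h : k ≤ m) : Xfin n k <:+ Xfin n m := by
  induction m with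
  | zero => simp at h; simp [h]
  | succ m ih =>
    rcases Nat.eq_or_lt_of_le h with rfl | h'
    · exact List.suffix_rfl
    · refine (ih (by omega)).trans ⟨Xfin n m ++ [(m : Fin (n+1))], ?_⟩
      simp [Xfin]

lemma crucial_Xfin (n : ℕ) : CrucialSq (Xfin n (n + 1)) := by
  refine ⟨sqFree_Xfin le_rfl, fun a => ?_⟩
  refine ⟨Xfin n a.val ++ [a], by simp, ?_⟩
  have h1 : Xfin n (a.val + 1) <:+ Xfin n (n + 1) := Xfin_suffix (by omega)
  have h2 : Xfin n (a.val + 1) ++ [a] <:+ Xfin n (n + 1) ++ [a] := by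
    obtain ⟨s, hs⟩ := h1
    exact ⟨s, by rw [← List.append_assoc, hs]⟩
  refine List.IsSuffix.isInfix (by
    have : Xfin n (a.val + 1) ++ [a] =
        (Xfin n a.val ++ [a]) ++ (Xfin n a.val ++ [a]) := by
      simp [Xfin, Fin.cast_val_eq_self, List.append_assoc]
    rw [← this]; exact h2)

lemma extract_suffix {α : Type*} {U : List α} (hsf : SqFree U) {a : α} {X : List α}
    (hX : X ≠ []) (h : (X ++ X) <:+: U ++ [a]) : ∃ Y : List α, Y ++ [a] ++ Y <:+ U := by
  have hrev : (X ++ X).reverse <:+: a :: U.reverse := by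
    have := List.reverse_infix.2 h
    simpa using this
  rcases List.infix_cons_iff.1 hrev with hpre | hinf
  · -- X ++ X is a suffix of U ++ [a]
    have hsuf : X ++ X <:+ U ++ [a] := by
      rw [← List.reverse_prefix]
      simpa using hpre
    obtain ⟨s, hs⟩ := hsuf
    obtain ⟨Y, b, hXe⟩ : ∃ (Y : List α) (b : α), X = Y ++ [b] :=
      ⟨X.dropLast, X.getLast hX, (List.dropLast_append_getLast hX).symm⟩
    rw [hXe] at hs
    have hs' : (s ++ (Y ++ ([b] ++ Y))) ++ [b] = U ++ [a] := by
      simpa [List.append_assoc] using hs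
    obtain ⟨h1, h2⟩ := List.append_inj' hs' (by simp)
    have hba : b = a := by simpa using h2
    subst hba
    refine ⟨Y, s, ?_⟩
    rw [← h1]
    simp [List.append_assoc]
  · -- X ++ X would be an infix of U
    exfalso
    refine hsf X hX ?_
    have : X ++ X <:+: U := by
      rw [← List.reverse_infix]
      simpa using hinf
    exact this

lemma prefix_period {α : Type*} {V A : List α} {c : α} (h : A ++ [c] ++ A <+: V)
    (k : ℕ) (hk : k < A.length) (h2 : k + A.length + 1 < V.length) :
    V[k]'(by omega) = V[k + A.length + 1]'h2 := by
  have e1 := h.getElem (i := k) (by simp; omega)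
  have e2 := h.getElem (i := k + A.length + 1) (by simp; omega)
  rw [List.getElem_append_left (h := by simp; omega), List.getElem_append_left hk] at e1
  rw [List.getElem_append_right (by simp)] at e2
  rw [← e1, ← e2]
  congr 1
  simp

lemma getElem_idx_congr {α : Type*} (l : List α) {i j : ℕ} (h : i = j) (hj : j < l.length) :
    l[i]'(h ▸ hj) = l[j]'hj := by subst h; rfl

lemma sqFree_reverse {α : Type*} {U : List α} (h : SqFree U) : SqFree U.reverse := by
  intro X hX hinf
  apply h X.reverse (by simpa)
  have h2 : (X ++ X).reverse <:+: U.reverse.reverse := List.reverse_infix.2 hinf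
  simpa using h2

/-- The key "gap" lemma, prefix version: if a square-free word has prefixes
`AaA` and `BbB` with `|A| < |B|`, then `|B| ≥ 2|A|+1`. -/
lemma gap_pre {α : Type*} {V A B : List α} {a b : α} (hsf : SqFree V)
    (hA : A ++ [a] ++ A <+: V) (hB : B ++ [b] ++ B <+: V)
    (hlt : A.length < B.length) : 2 * A.length + 1 ≤ B.length := by
  by_contra hcon
  push_neg at hcon
  set LA := A.length with hLA
  set LB := B.length with hLB
  set d := LB - LA with hd
  have hd1 : 1 ≤ d := by omega
  have hdLA : d ≤ LA := by omega
  have hVB : 2 * LB + 1 ≤ V.length := by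
    have := hB.length_le; simp at this; omega
  have key : ∀ j, j < d → V.getD (j + LA + 1) b = V.getD (j + LB + 1) b := by
    intro j hj
    rw [List.getD_eq_getElem V b (by omega), List.getD_eq_getElem V b (by omega)]
    have e1 := prefix_period hA j (by omega) (by omega)
    have e2 := prefix_period hB j (by omega) (by omega)
    rw [← e1, ← e2]
  set W := (V.drop (LA + 1)).take d with hW
  have hWlen : W.length = d := by
    simp [hW]; omega
  have hWW : W ++ W = (V.drop (LA + 1)).take (2 * d) := by
    apply List.ext_getElem
    · simp [hWlen]; omega
    · intro i h1 h2
      have hilt : i < 2 * d := by simp [hWlen] at h1; omega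
      rw [List.getElem_take, List.getElem_drop]
      rw [List.getElem_append]
      split
      · rw [List.getElem_take, List.getElem_drop]
      · next hi =>
        rw [List.getElem_take, List.getElem_drop]
        simp only [hWlen] at hi ⊢
        have hid : d ≤ i := by omega
        rw [← List.getD_eq_getElem V b (by omega), ← List.getD_eq_getElem V b (by omega)]
        have c1 : LA + 1 + (i - d) = (i - d) + LA + 1 := by omega
        have c2 : LA + 1 + i = (i - d) + LB + 1 := by omega
        rw [c1, c2]
        exact key (i - d) (by omega)
  have hWne : W ≠ [] := by
    intro h; rw [h] at hWlen; simp at hWlen; omega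
  refine hsf W hWne ?_
  rw [hWW]
  exact (List.take_prefix _ _).isInfix.trans (List.drop_suffix _ _).isInfix

/-- The gap lemma, suffix version. -/
lemma gap_suf {α : Type*} {U Z Y : List α} {a b : α} (hsf : SqFree U)
    (hZ : Z ++ [a] ++ Z <:+ U) (hY : Y ++ [b] ++ Y <:+ U)
    (hlt : Z.length < Y.length) : 2 * Z.length + 1 ≤ Y.length := by
  have hA : Z.reverse ++ [a] ++ Z.reverse <+: U.reverse := by
    have := List.reverse_prefix.2 hZ
    simpa [List.append_assoc] using this
  have hB : Y.reverse ++ [b] ++ Y.reverse <+: U.reverse := by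
    have := List.reverse_prefix.2 hY
    simpa [List.append_assoc] using this
  have := gap_pre (sqFree_reverse hsf) hA hB (by simpa using hlt)
  simpa using this

lemma center_eq {α : Type*} {U Z Y : List α} {a b : α}
    (hZ : Z ++ [a] ++ Z <:+ U) (hY : Y ++ [b] ++ Y <:+ U)
    (hl : Z.length = Y.length) : a = b := by
  have heq : Z ++ ([a] ++ Z) = Y ++ ([b] ++ Y) := by
    have := suffix_eq_of_length hZ hY (by simp [hl])
    simpa [List.append_assoc] using this
  obtain ⟨h1, h2⟩ := List.append_inj heq hl
  simp at h2
  exact h2.1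

/-- Up to a permutation of the letters, the word `X_{n+1}` is the unique
minimal crucial word w.r.t. the set of squares over an `(n+1)`-letter alphabet. -/
theorem minimal_crucial_unique (n : ℕ) (U : List (Fin (n + 1)))
    (hU : CrucialSq U) (hmin : ∀ V : List (Fin (n + 1)), CrucialSq V → U.length ≤ V.length) :
    ∃ σ : Equiv.Perm (Fin (n + 1)), U = (Xfin n (n + 1)).map σ := by
  obtain ⟨hsf, hext⟩ := hU
  have hYa : ∀ a : Fin (n+1), ∃ Y, Y ++ [a] ++ Y <:+ U := by
    intro a
    obtain ⟨X, hX, hinf⟩ := hext a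
    exact extract_suffix hsf hX hinf
  choose Y hY using hYa
  set L : Fin (n+1) → ℕ := fun a => 2 * (Y a).length + 1 with hLdef
  have hLinj : Function.Injective L := by
    intro a b hab
    have hlen : (Y a).length = (Y b).length := by simp [hLdef] at hab; omega
    exact center_eq (hY a) (hY b) hlen
  set σ := Tuple.sort L with hσ
  have hmono : StrictMono (L ∘ σ) :=
    (Tuple.monotone_sort L).strictMono_of_injective (hLinj.comp σ.injective)
  have hgap : ∀ i j : Fin (n+1), i < j → 2 * (L (σ i)) + 1 ≤ L (σ j) := by
    intro i j hij
    have hlt : (Y (σ i)).length < (Y (σ j)).length := by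
      have := hmono hij
      simp only [Function.comp, hLdef] at this
      omega
    have := gap_suf hsf (hY (σ i)) (hY (σ j)) hlt
    simp only [hLdef]
    omega
  have hcastlt : ∀ i j : ℕ, i < j → j ≤ n → ((i : Fin (n+1)) < (j : Fin (n+1))) := by
    intro i j h1 h2
    rw [Fin.lt_def, Fin.val_cast_of_lt (by omega), Fin.val_cast_of_lt (by omega)]
    exact h1
  have hLle : ∀ a, L a ≤ U.length := by
    intro a
    have := (hY a).length_le
    simp only [hLdef]
    simp at this
    omega
  have hlow : ∀ m : ℕ, (hm : m ≤ n) → 2^(m+1) ≤ L (σ (m : Fin (n+1))) + 1 := by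
    intro m
    induction m with
    | zero =>
      intro _
      have : 1 ≤ L (σ ((0:ℕ) : Fin (n+1))) := by simp [hLdef]
      simpa using this
    | succ m ih =>
      intro hm
      have h1 := ih (by omega)
      have h2 := hgap ((m:ℕ) : Fin (n+1)) ((m+1 : ℕ) : Fin (n+1))
        (hcastlt m (m+1) (by omega) (by omega))
      rw [pow_succ]
      omega
  have hXlen : (Xfin n (n+1)).length = 2^(n+1) - 1 := Xfin_length n (n+1)
  have hUle : U.length ≤ 2^(n+1) - 1 := hXlen ▸ hmin _ (crucial_Xfin n)
  have hUge : 2^(n+1) - 1 ≤ U.length := by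
    have h1 := hlow n le_rfl
    have h2 := hLle (σ ((n:ℕ) : Fin (n+1)))
    omega
  have hUlen : U.length = 2^(n+1) - 1 := le_antisymm hUle hUge
  have hchain : ∀ k m : ℕ, (hmk : m + k ≤ n) →
      2^k * (L (σ ((m:ℕ) : Fin (n+1))) + 1) ≤ L (σ ((m+k : ℕ) : Fin (n+1))) + 1 := by
    intro k
    induction k with
    | zero => intro m h; simp
    | succ k ih =>
      intro m h
      have h1 := ih m (by omega)
      have h2 := hgap ((m+k : ℕ) : Fin (n+1)) ((m+k+1 : ℕ) : Fin (n+1))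
        (hcastlt (m+k) (m+k+1) (by omega) (by omega))
      have e : m + (k+1) = m + k + 1 := by omega
      rw [e, pow_succ]
      calc 2^k * 2 * (L (σ ((m:ℕ) : Fin (n+1))) + 1)
          = 2 * (2^k * (L (σ ((m:ℕ) : Fin (n+1))) + 1)) := by ring
        _ ≤ 2 * (L (σ ((m+k : ℕ) : Fin (n+1))) + 1) := by omega
        _ ≤ L (σ ((m+k+1 : ℕ) : Fin (n+1))) + 1 := by omega
  have hupp : ∀ m : ℕ, (hm : m ≤ n) → L (σ ((m:ℕ) : Fin (n+1))) + 1 ≤ 2^(m+1) := by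
    intro m hm
    have h1 := hchain (n - m) m (by omega)
    rw [show m + (n - m) = n from by omega] at h1
    have h2 := hLle (σ ((n:ℕ) : Fin (n+1)))
    have h3 : (2:ℕ)^(n+1) = 2^(n-m) * 2^(m+1) := by
      rw [← pow_add]; congr 1; omega
    have h4 : 2^(n-m) * (L (σ ((m:ℕ) : Fin (n+1))) + 1) ≤ 2^(n-m) * 2^(m+1) := by
      calc 2^(n-m) * (L (σ ((m:ℕ) : Fin (n+1))) + 1)
          ≤ L (σ ((n:ℕ) : Fin (n+1))) + 1 := h1
        _ ≤ U.length + 1 := by omega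
        _ ≤ 2^(n+1) := by
            have hp : (1:ℕ) ≤ 2^(n+1) := Nat.one_le_two_pow
            omega
        _ = 2^(n-m) * 2^(m+1) := h3
    exact Nat.le_of_mul_le_mul_left h4 (Nat.pow_pos (by omega))
  have hLval : ∀ m : ℕ, (hm : m ≤ n) → L (σ ((m:ℕ) : Fin (n+1))) = 2^(m+1) - 1 := by
    intro m hm
    have h1 := hlow m hm
    have h2 := hupp m hm
    have hp : (1:ℕ) ≤ 2^(m+1) := Nat.one_le_two_pow
    omega
  have hpow1 : ∀ k : ℕ, (1:ℕ) ≤ 2^k := fun k => Nat.one_le_two_pow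
  have hstruct : ∀ m : ℕ, (hm : m ≤ n) → (Xfin n (m+1)).map σ =
      Y (σ ((m:ℕ) : Fin (n+1))) ++ [σ ((m:ℕ) : Fin (n+1))] ++ Y (σ ((m:ℕ) : Fin (n+1))) := by
    intro m
    induction m with
    | zero =>
      intro hm
      have h0 : (Y (σ ((0:ℕ) : Fin (n+1)))).length = 0 := by
        have := hLval 0 (by omega)
        simp only [hLdef] at this
        have hp : (2:ℕ)^(0+1) = 2 := by norm_num
        omega
      rw [List.eq_nil_of_length_eq_zero h0]
      simp only [Xfin]
      simp
    | succ m ih =>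
      intro hm
      have ihm := ih (by omega)
      have hYlen : (Y (σ ((m+1 : ℕ) : Fin (n+1)))).length = 2^(m+1) - 1 := by
        have := hLval (m+1) hm
        simp only [hLdef] at this
        have hp : (2:ℕ)^(m+1+1) = 2*2^(m+1) := by ring
        have := hpow1 (m+1)
        omega
      have hSlen : (Y (σ ((m:ℕ) : Fin (n+1))) ++ [σ ((m:ℕ) : Fin (n+1))] ++
          Y (σ ((m:ℕ) : Fin (n+1)))).length = 2^(m+1) - 1 := by
        have := hLval m (by omega)
        simp only [hLdef] at this
        simp
        omega
      have hYS : Y (σ ((m+1 : ℕ) : Fin (n+1))) =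
          Y (σ ((m:ℕ) : Fin (n+1))) ++ [σ ((m:ℕ) : Fin (n+1))] ++ Y (σ ((m:ℕ) : Fin (n+1))) := by
        have hs1 : Y (σ ((m+1 : ℕ) : Fin (n+1))) <:+ U :=
          (List.suffix_append _ _).trans (hY (σ ((m+1 : ℕ) : Fin (n+1))))
        exact suffix_eq_of_length hs1 (hY (σ ((m:ℕ) : Fin (n+1)))) (by rw [hYlen, hSlen])
      rw [hYS]
      conv_lhs => rw [Xfin]
      rw [List.map_append, List.map_append, ihm]
      simp
  have hfin := hstruct n le_rfl
  have hSlenU : (Y (σ ((n:ℕ) : Fin (n+1))) ++ [σ ((n:ℕ) : Fin (n+1))] ++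
      Y (σ ((n:ℕ) : Fin (n+1)))).length = U.length := by
    have := hLval n le_rfl
    simp only [hLdef] at this
    have h2 := hpow1 (n+1)
    simp only [List.length_append, List.length_singleton]
    omega
  refine ⟨σ, ?_⟩
  rw [hfin]
  exact ((hY (σ ((n:ℕ) : Fin (n+1)))).eq_of_length hSlenU).symm
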